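/- Let E be a real-valued function defined on bipartite states of every local dimension which is invariant under local isometries (E(V ρ V†) = E(ρ) whenever V = V_A ⊗ V_B with V_A, V_B isometries on Alice's and Bob's systems respectively). If E satisfies the binary flag equality E(p ρ⊗P₀ + (1−p) σ⊗P₁) = p E(ρ) + (1−p) E(σ) for all bipartite states ρ, σ of equal local dimension and all p ∈ [0,1], then E satisfies the general FLAGS condition: E(∑_{i=0}^{m−1} p_i ρ_i ⊗ |i⟩⟨i|) = ∑_{i=0}^{m−1} p_i E(ρ_i) for every m, every probability distribution (p_0,…,p_{m−1}), every family of bipartite states ρ_i of equal local dimension, and orthogonal flag states |0⟩,…,|m−1⟩ held by Alice. -/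

import Mathlib

open Matrix Filter
open scoped Classical ComplexOrder

noncomputable section

/-- A bipartite matrix of local dimension `d`: rows and columns are indexed by
pairs `(a, b)` with `a` Alice's index and `b` Bob's index. -/
abbrev BMat (d : ℕ) : Type := Matrix (Fin d × Fin d) (Fin d × Fin d) ℂ

/-- `ρ` is a bipartite state: positive semidefinite with trace one. -/
def IsState {d : ℕ} (ρ : BMat d) : Prop := ρ.PosSemidef ∧ ρ.trace = 1

/-- Regrouping of indices used to define the tensor product of bipartite states. -/
def tensorEquiv (d₁ d₂ : ℕ) :
    ((Fin d₁ × Fin d₁) × (Fin d₂ × Fin d₂)) ≃ (Fin (d₁ * d₂) × Fin (d₁ * d₂)) :=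
  (Equiv.prodProdProdComm (Fin d₁) (Fin d₁) (Fin d₂) (Fin d₂)).trans
    (Equiv.prodCongr finProdFinEquiv finProdFinEquiv)

/-- Tensor product of bipartite states: Kronecker product, reindexed so that
Alice's systems are grouped together and Bob's systems are grouped together. -/
def tensor {d₁ d₂ : ℕ} (ρ : BMat d₁) (σ : BMat d₂) : BMat (d₁ * d₂) :=
  Matrix.reindex (tensorEquiv d₁ d₂) (tensorEquiv d₁ d₂)
    (Matrix.kroneckerMap (· * ·) ρ σ)

/-- Transport a bipartite matrix along an equality of dimensions. -/
def castDim {d d' : ℕ} (h : d = d') (ρ : BMat d) : BMat d' :=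
  Matrix.reindex (Equiv.prodCongr (finCongr h) (finCongr h))
    (Equiv.prodCongr (finCongr h) (finCongr h)) ρ

/-- `tpow ρ n` is the `n`-fold tensor power `ρ^⊗n`. -/
def tpow {d : ℕ} (ρ : BMat d) : (n : ℕ) → BMat (d ^ n)
  | 0 => castDim (pow_zero d).symm (1 : BMat 1)
  | n + 1 => castDim (by ring) (tensor ρ (tpow ρ n))

/-- Partial trace over Bob's system. -/
def trB {d : ℕ} (M : BMat d) : Matrix (Fin d) (Fin d) ℂ :=
  Matrix.of fun a a' => ∑ b : Fin d, M (a, b) (a', b)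

/-- Von Neumann entropy `S(ρ) = −tr[ρ log₂ ρ]`, computed via the eigenvalues
(with the convention `0 log 0 = 0`, and junk value `0` on non-Hermitian input). -/
def vnEntropy {n : Type*} [Fintype n] [DecidableEq n] (M : Matrix n n ℂ) : ℝ :=
  if h : M.IsHermitian then
    -∑ i, h.eigenvalues i * Real.logb 2 (h.eigenvalues i)
  else 0

/-- Entropy of entanglement of a pure state: `S(tr_B |ψ⟩⟨ψ|)`. -/
def entropyOfEntanglement {d : ℕ} (ψ : Fin d × Fin d → ℂ) : ℝ :=
  vnEntropy (trB (Matrix.vecMulVec ψ (star ψ)))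

/-- Entanglement of formation: the infimum of `∑ pᵢ S(tr_B |ψᵢ⟩⟨ψᵢ|)` over all
finite pure-state decompositions `ρ = ∑ pᵢ |ψᵢ⟩⟨ψᵢ|`. -/
def EF {d : ℕ} (ρ : BMat d) : ℝ :=
  sInf { x : ℝ | ∃ (k : ℕ) (p : Fin k → ℝ) (ψ : Fin k → (Fin d × Fin d → ℂ)),
    (∀ i, 0 ≤ p i) ∧ (∑ i, p i = 1) ∧
    (∀ i, ∑ j, ‖ψ i j‖ ^ 2 = 1) ∧
    ρ = ∑ i, (p i : ℂ) • Matrix.vecMulVec (ψ i) (star (ψ i)) ∧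
    x = ∑ i, p i * entropyOfEntanglement (ψ i) }

/-- Entanglement cost: `E_C(ρ) = lim_{n→∞} E_F(ρ^⊗n)/n`. -/
def EC {d : ℕ} (ρ : BMat d) : ℝ :=
  limUnder atTop (fun n : ℕ => EF (tpow ρ n) / n)

/-- Regrouping of indices used to define flagged mixtures. -/
def flagEquiv (m d : ℕ) :
    ((Fin m × Fin d) × (Fin m × Fin d)) ≃ (Fin (m * d) × Fin (m * d)) :=
  Equiv.prodCongr finProdFinEquiv finProdFinEquiv

/-- The flagged mixture `∑ᵢ pᵢ ρᵢ ⊗ |i⟩⟨i|`, where Alice holds an `m`-dimensional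
flag register (Bob's side is padded with the fixed pure state `|0⟩⟨0|` so that the
result is a bipartite state of local dimension `m*d`). -/
def mflagged {d m : ℕ} (p : Fin m → ℝ) (ρ : Fin m → BMat d) : BMat (m * d) :=
  Matrix.reindex (flagEquiv m d) (flagEquiv m d)
    (Matrix.of fun x y =>
      if x.1.1 = y.1.1 ∧ (x.2.1 : ℕ) = 0 ∧ (y.2.1 : ℕ) = 0 then
        (p x.1.1 : ℂ) * (ρ x.1.1) (x.1.2, x.2.2) (y.1.2, y.2.2)
      else 0)

/-- The binary flagged mixture `p ρ⊗P₀ + (1−p) σ⊗P₁`, where Alice holds a qubit flag. -/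
def flagged {d : ℕ} (p : ℝ) (ρ σ : BMat d) : BMat (2 * d) :=
  mflagged ![p, 1 - p] ![ρ, σ]

/-! Induction on the number of flags. Sending Alice's flag `0` to the pair `(0, 0)` and the flag
`j + 1` to `(1, j)` is an injection of `m + 2` flags into a qubit flag times `m + 1` flags; as a
local 0/1 isometry it carries `∑ᵢ pᵢ ρᵢ ⊗ |i⟩⟨i|` to the binary flagged mixture, with weight
`p₀`, of `ρ₀` and of the `(m + 1)`-flagged mixture of the conditional weights `pⱼ₊₁ / (1 - p₀)`.
Isometry invariance and the binary flag equality then peel off one flag at a time. -/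

def embMatrix {ι κ : Type*} [DecidableEq κ] (f : ι → κ) : Matrix κ ι ℂ :=
  Matrix.of fun x a => if x = f a then 1 else 0

theorem embMatrix_conjTranspose_mul_self {ι κ : Type*} [Fintype κ] [DecidableEq ι]
    [DecidableEq κ] {f : ι → κ} (hf : Function.Injective f) :
    (embMatrix f)ᴴ * embMatrix f = 1 := by
  ext a b
  simp [Matrix.mul_apply, embMatrix, Matrix.one_apply, hf.eq_iff, eq_comm]

theorem embMatrix_mul_embMatrix {ι κ τ : Type*} [Fintype κ] [DecidableEq κ] [DecidableEq τ]
    (g : κ → τ) (f : ι → κ) : embMatrix g * embMatrix f = embMatrix (g ∘ f) := by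
  ext x a
  simp [Matrix.mul_apply, embMatrix]

theorem kroneckerMap_embMatrix {ι κ ι' κ' : Type*} [DecidableEq κ] [DecidableEq κ']
    (f : ι → κ) (g : ι' → κ') :
    Matrix.kroneckerMap (· * ·) (embMatrix f) (embMatrix g) = embMatrix (Prod.map f g) := by
  ext ⟨x, x'⟩ ⟨a, a'⟩
  simp [embMatrix, Prod.ext_iff, ← ite_and, and_comm]

theorem embMatrix_mul_mul_conjTranspose_apply {ι κ : Type*} [Fintype ι] [DecidableEq κ]
    (f : ι → κ) (M : Matrix ι ι ℂ) (x y : κ) :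
    (embMatrix f * M * (embMatrix f)ᴴ) x y =
      ∑ a, ∑ b, if x = f a ∧ y = f b then M a b else 0 := by
  simp only [Matrix.mul_apply, Finset.sum_mul]
  rw [Finset.sum_comm]
  refine Finset.sum_congr rfl fun a _ => Finset.sum_congr rfl fun b _ => ?_
  by_cases hx : x = f a <;> by_cases hy : y = f b <;> simp [embMatrix, hx, hy]

def flagEmb {m d : ℕ} (i : Fin m) : Fin d → Fin (m * d) := fun a => finProdFinEquiv (i, a)

theorem flagEmb_injective {m d : ℕ} (i : Fin m) : Function.Injective (flagEmb (d := d) i) :=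
  fun _ _ h => by simpa [flagEmb] using h

def localEmbed {d D : ℕ} (fA fB : Fin d → Fin D) (ρ : BMat d) : BMat D :=
  embMatrix (Prod.map fA fB) * ρ * (embMatrix (Prod.map fA fB))ᴴ

theorem mflagged_eq_sum {d m : ℕ} (p : Fin (m + 1) → ℝ) (ρ : Fin (m + 1) → BMat d) :
    mflagged p ρ = ∑ i, p i • localEmbed (flagEmb i) (flagEmb 0) (ρ i) := by
  ext ⟨x₁, x₂⟩ ⟨y₁, y₂⟩
  obtain ⟨⟨i₁, a₁⟩, rfl⟩ := finProdFinEquiv.surjective x₁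
  obtain ⟨⟨i₂, a₂⟩, rfl⟩ := finProdFinEquiv.surjective x₂
  obtain ⟨⟨j₁, b₁⟩, rfl⟩ := finProdFinEquiv.surjective y₁
  obtain ⟨⟨j₂, b₂⟩, rfl⟩ := finProdFinEquiv.surjective y₂
  by_cases h : i₁ = j₁ <;>
    simp [h, mflagged, flagEquiv, localEmbed, embMatrix_mul_mul_conjTranspose_apply, flagEmb,
      Matrix.sum_apply, Fintype.sum_prod_type, ite_and, eq_comm (a := j₁)]

theorem localEmbed_localEmbed {d D D' : ℕ} (gA gB : Fin D → Fin D') (fA fB : Fin d → Fin D)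
    (ρ : BMat d) :
    localEmbed gA gB (localEmbed fA fB ρ) = localEmbed (gA ∘ fA) (gB ∘ fB) ρ := by
  simp only [localEmbed, ← Prod.map_comp_map, ← embMatrix_mul_embMatrix,
    Matrix.conjTranspose_mul, Matrix.mul_assoc]

theorem localEmbed_smul {d D : ℕ} (fA fB : Fin d → Fin D) (c : ℝ) (ρ : BMat d) :
    localEmbed fA fB (c • ρ) = c • localEmbed fA fB ρ := by
  simp only [localEmbed, Matrix.mul_smul, Matrix.smul_mul]

theorem localEmbed_sum {d D : ℕ} (fA fB : Fin d → Fin D) {ι : Type*} (s : Finset ι)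
    (ρ : ι → BMat d) :
    localEmbed fA fB (∑ i ∈ s, ρ i) = ∑ i ∈ s, localEmbed fA fB (ρ i) := by
  simp only [localEmbed, Matrix.mul_sum, Matrix.sum_mul]

theorem IsState.localEmbed {d D : ℕ} {fA fB : Fin d → Fin D} (hA : Function.Injective fA)
    (hB : Function.Injective fB) {ρ : BMat d} (hρ : IsState ρ) :
    IsState (localEmbed fA fB ρ) :=
  ⟨hρ.1.mul_mul_conjTranspose_same _, by
    rw [_root_.localEmbed, Matrix.trace_mul_cycle,
      embMatrix_conjTranspose_mul_self (hA.prodMap hB), Matrix.one_mul, hρ.2]⟩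

theorem isState_mflagged {d m : ℕ} {p : Fin (m + 1) → ℝ} {ρ : Fin (m + 1) → BMat d}
    (hp : ∀ i, 0 ≤ p i) (hs : ∑ i, p i = 1) (hρ : ∀ i, IsState (ρ i)) :
    IsState (mflagged p ρ) := by
  have hρ' i := (hρ i).localEmbed (flagEmb_injective i) (flagEmb_injective 0)
  rw [mflagged_eq_sum]
  refine ⟨Matrix.posSemidef_sum _ fun i _ => (hρ' i).1.smul (hp i), ?_⟩
  simp [Matrix.trace_sum, (hρ' _).2, ← Complex.ofReal_sum, hs]

def splitFlag (m : ℕ) : Fin (m + 2) → Fin 2 × Fin (m + 1) :=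
  Fin.cons (0, 0) fun j => (1, j)

theorem splitFlag_injective (m : ℕ) : Function.Injective (splitFlag m) :=
  Fin.cons_injective_iff.2 ⟨by simp, fun _ _ h => (Prod.mk.inj h).2⟩

def splitFlagEmb (m d : ℕ) : Fin ((m + 2) * d) → Fin (2 * ((m + 1) * d)) :=
  finProdFinEquiv ∘ Prod.map id finProdFinEquiv ∘ Equiv.prodAssoc _ _ _ ∘
    Prod.map (splitFlag m) id ∘ finProdFinEquiv.symm

theorem splitFlagEmb_injective (m d : ℕ) : Function.Injective (splitFlagEmb m d) :=
  finProdFinEquiv.injective.comp <|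
    (Function.injective_id.prodMap finProdFinEquiv.injective).comp <|
    (Equiv.prodAssoc _ _ _).injective.comp <|
    ((splitFlag_injective m).prodMap Function.injective_id).comp finProdFinEquiv.symm.injective

theorem splitFlagEmb_comp_flagEmb_zero (m d : ℕ) :
    splitFlagEmb m d ∘ flagEmb 0 = flagEmb 0 ∘ flagEmb 0 := by
  ext a
  simp [splitFlagEmb, splitFlag, flagEmb]

theorem splitFlagEmb_comp_flagEmb_succ {m d : ℕ} (j : Fin (m + 1)) :
    splitFlagEmb m d ∘ flagEmb j.succ = flagEmb 1 ∘ flagEmb j := by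
  ext a
  simp [splitFlagEmb, splitFlag, flagEmb]

theorem localEmbed_splitFlagEmb_mflagged {d m : ℕ} (p : Fin (m + 2) → ℝ)
    (q : Fin (m + 1) → ℝ) (ρ : Fin (m + 2) → BMat d) (hq : ∀ j, (1 - p 0) * q j = p j.succ) :
    localEmbed (splitFlagEmb m d) (splitFlagEmb m d) (mflagged p ρ) =
      flagged (p 0) (localEmbed (flagEmb 0) (flagEmb 0) (ρ 0)) (mflagged q fun j => ρ j.succ) := by
  rw [flagged, mflagged_eq_sum ![_, _], Fin.sum_univ_two]
  simp only [Matrix.cons_val_zero, Matrix.cons_val_one, mflagged_eq_sum, localEmbed_sum,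
    localEmbed_smul, localEmbed_localEmbed, Finset.smul_sum, smul_smul, hq]
  rw [Fin.sum_univ_succ]
  simp only [splitFlagEmb_comp_flagEmb_zero, splitFlagEmb_comp_flagEmb_succ]

theorem mflagged_of_fin_one {d : ℕ} {p : Fin 1 → ℝ} (hp : p 0 = 1) (ρ : Fin 1 → BMat d) :
    mflagged p ρ = localEmbed (flagEmb 0) (flagEmb 0) (ρ 0) := by
  rw [mflagged_eq_sum, Fin.sum_univ_one, hp, one_smul]

theorem exists_conditional_tail {m : ℕ} {p : Fin (m + 2) → ℝ} (hp : ∀ i, 0 ≤ p i)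
    (hs : ∑ i, p i = 1) :
    ∃ q : Fin (m + 1) → ℝ, (∀ j, 0 ≤ q j) ∧ ∑ j, q j = 1 ∧ ∀ j, (1 - p 0) * q j = p j.succ := by
  have htail : ∑ j : Fin (m + 1), p j.succ = 1 - p 0 := by
    rw [Fin.sum_univ_succ] at hs
    linarith
  by_cases h0 : p 0 = 1
  · -- the tail weights vanish, so any distribution serves as `q`
    refine ⟨Pi.single 0 1, fun j => ?_, by simp, fun j => ?_⟩
    · by_cases hj : j = 0 <;> simp [hj]
    · rw [h0, sub_self, zero_mul, eq_comm]
      rw [h0, sub_self] at htail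
      exact (Finset.sum_eq_zero_iff_of_nonneg fun i _ => hp i.succ).1 htail j (Finset.mem_univ j)
  · have hpos : 0 < 1 - p 0 := by
      have : p 0 ≤ 1 := hs ▸ Finset.single_le_sum (fun i _ => hp i) (Finset.mem_univ 0)
      exact sub_pos.2 (lt_of_le_of_ne this h0)
    refine ⟨fun j => p j.succ / (1 - p 0), fun j => div_nonneg (hp j.succ) hpos.le, ?_,
      fun j => mul_div_cancel₀ _ hpos.ne'⟩
    rw [← Finset.sum_div, htail, div_self hpos.ne']

def IsLocalIsometryInvariant (E : (d : ℕ) → BMat d → ℝ) : Prop :=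
  ∀ (d d' : ℕ) (ρ : BMat d) (VA VB : Matrix (Fin d') (Fin d) ℂ),
    VAᴴ * VA = 1 → VBᴴ * VB = 1 → IsState ρ →
    E d' (Matrix.kroneckerMap (· * ·) VA VB * ρ * (Matrix.kroneckerMap (· * ·) VA VB)ᴴ) = E d ρ

def HasBinaryFlagEquality (E : (d : ℕ) → BMat d → ℝ) : Prop :=
  ∀ (d : ℕ) (ρ σ : BMat d), IsState ρ → IsState σ → ∀ p : ℝ, 0 ≤ p → p ≤ 1 →
    E (2 * d) (flagged p ρ σ) = p * E d ρ + (1 - p) * E d σ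

theorem IsLocalIsometryInvariant.apply_localEmbed {E : (d : ℕ) → BMat d → ℝ}
    (hE : IsLocalIsometryInvariant E) {d D : ℕ} {fA fB : Fin d → Fin D}
    (hA : Function.Injective fA) (hB : Function.Injective fB) {ρ : BMat d} (hρ : IsState ρ) :
    E D (localEmbed fA fB ρ) = E d ρ := by
  simpa only [localEmbed, kroneckerMap_embMatrix] using
    hE d D ρ _ _ (embMatrix_conjTranspose_mul_self hA) (embMatrix_conjTranspose_mul_self hB) hρ

theorem apply_mflagged_eq_add {E : (d : ℕ) → BMat d → ℝ} (hE : IsLocalIsometryInvariant E)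
    (hflag : HasBinaryFlagEquality E) {d m : ℕ} {p : Fin (m + 2) → ℝ} {ρ : Fin (m + 2) → BMat d}
    (hp : ∀ i, 0 ≤ p i) (hs : ∑ i, p i = 1) (hρ : ∀ i, IsState (ρ i)) {q : Fin (m + 1) → ℝ}
    (hq : ∀ j, 0 ≤ q j) (hqs : ∑ j, q j = 1) (hpq : ∀ j, (1 - p 0) * q j = p j.succ) :
    E ((m + 2) * d) (mflagged p ρ) =
      p 0 * E d (ρ 0) + (1 - p 0) * E ((m + 1) * d) (mflagged q fun j => ρ j.succ) := by
  have hp0 : p 0 ≤ 1 := hs ▸ Finset.single_le_sum (fun i _ => hp i) (Finset.mem_univ 0)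
  have hρ0 : IsState (localEmbed (flagEmb (0 : Fin (m + 1))) (flagEmb 0) (ρ 0)) :=
    (hρ 0).localEmbed (flagEmb_injective _) (flagEmb_injective _)
  rw [← hE.apply_localEmbed (splitFlagEmb_injective m d) (splitFlagEmb_injective m d)
      (isState_mflagged hp hs hρ), localEmbed_splitFlagEmb_mflagged p q ρ hpq,
    hflag _ _ _ hρ0 (isState_mflagged hq hqs fun j => hρ j.succ) _ (hp 0) hp0,
    hE.apply_localEmbed (flagEmb_injective 0) (flagEmb_injective 0) (hρ 0)]

/-- If a function `E` on bipartite states of every local dimension is invariant under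
local isometries and satisfies the binary flag equality
`E(p ρ⊗P₀ + (1−p) σ⊗P₁) = p E(ρ) + (1−p) E(σ)` for all states of equal local
dimension and all `p ∈ [0,1]`, then it satisfies the general FLAGS condition
`E(∑ᵢ pᵢ ρᵢ ⊗ |i⟩⟨i|) = ∑ᵢ pᵢ E(ρᵢ)`. -/
theorem binary_flag_equality_implies_FLAGS
    (E : (d : ℕ) → BMat d → ℝ)
    (hIso : ∀ (d d' : ℕ) (ρ : BMat d) (VA VB : Matrix (Fin d') (Fin d) ℂ),
      VAᴴ * VA = 1 → VBᴴ * VB = 1 → IsState ρ →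
      E d' (Matrix.kroneckerMap (· * ·) VA VB * ρ *
          (Matrix.kroneckerMap (· * ·) VA VB)ᴴ) = E d ρ)
    (hBin : ∀ (d : ℕ) (ρ σ : BMat d), IsState ρ → IsState σ → ∀ p : ℝ, 0 ≤ p → p ≤ 1 →
      E (2 * d) (flagged p ρ σ) = p * E d ρ + (1 - p) * E d σ) :
    ∀ (d m : ℕ) (p : Fin m → ℝ) (ρ : Fin m → BMat d),
      (∀ i, 0 ≤ p i) → (∑ i, p i = 1) → (∀ i, IsState (ρ i)) →
      E (m * d) (mflagged p ρ) = ∑ i, p i * E d (ρ i) := by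
  have hE : IsLocalIsometryInvariant E := hIso
  intro d m
  obtain _ | m := m
  · simp
  induction m with
  | zero =>
    intro p ρ _ hs hρ
    rw [Fin.sum_univ_one] at hs ⊢
    rw [mflagged_of_fin_one hs, hE.apply_localEmbed (flagEmb_injective 0) (flagEmb_injective 0)
      (hρ 0), hs, one_mul]
  | succ m ih =>
    intro p ρ hp hs hρ
    obtain ⟨q, hq, hqs, hpq⟩ := exists_conditional_tail hp hs
    rw [apply_mflagged_eq_add hE hBin hp hs hρ hq hqs hpq, ih q _ hq hqs fun j => hρ j.succ,
      Fin.sum_univ_succ (fun i => p i * E d (ρ i)), Finset.mul_sum]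
    simp only [← mul_assoc, hpq]
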